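/- arXiv:2110.14148 — 2 statements merged into one kernel-verified Lean document; each statement's English description precedes it below -/
import Mathlib

section
/- Let Q be a Borel probability measure on ℝ^p with Q([−M,M]^p) = 1. Then there exists Θ₀ ∈ ([−M,M]^p)^k such that ∫ f_{Θ₀} dQ ≤ ∫ f_Θ dQ for every Θ ∈ (ℝ^p)^k; in particular the infimum of Θ ↦ ∫ f_Θ dQ over all of (ℝ^p)^k equals its infimum over ([−M,M]^p)^k, and this infimum is attained at a point of ([−M,M]^p)^k. -/
open MeasureTheory ProbabilityTheory Real Filter
open scoped ENNReal

/-- Bregman divergence generated by a differentiable function `φ`. -/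
noncomputable def dphi {p : ℕ} (φ : EuclideanSpace ℝ (Fin p) → ℝ)
    (x y : EuclideanSpace ℝ (Fin p)) : ℝ :=
  φ x - φ y - inner ℝ (gradient φ y) (x - y)

/-- The cube `[-M, M]^p` in `ℝ^p`. -/
def cube (p : ℕ) (M : ℝ) : Set (EuclideanSpace ℝ (Fin p)) := {x | ∀ i, |x i| ≤ M}

/-- The clustering objective `f_Θ(x) = Ψ(d_φ(x,θ₁),…,d_φ(x,θ_k))`. -/
noncomputable def fTheta {p k : ℕ} (φ : EuclideanSpace ℝ (Fin p) → ℝ)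
    (Ψ : (Fin k → ℝ) → ℝ) (Θ : Fin k → EuclideanSpace ℝ (Fin p))
    (x : EuclideanSpace ℝ (Fin p)) : ℝ :=
  Ψ (fun j => dphi φ x (Θ j))

/-
Replacing a centroid `θ` by its Bregman projection `θ'` onto the cube (a minimiser of
`y ↦ d_φ(y, θ)` over the cube) can only decrease `d_φ(x, ·)` at every `x` of the cube: first-order
optimality of `θ'` together with the three-point identity for Bregman divergences gives the
Pythagorean inequality `d_φ(x, θ') + d_φ(θ', θ) ≤ d_φ(x, θ)`. As `Ψ` is monotone and `Q` lives on
the cube, projecting all centroids lowers the risk `Θ ↦ ∫ f_Θ dQ`. The risk is continuous on the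
compact set `([-M,M]^p)^k` (dominated convergence, using continuity of `∇φ` on the cube), so it
has a minimiser there, which is then a global minimiser.
-/

open Set

theorem ConvexOn.fderiv_apply_sub_le {E : Type*} [NormedAddCommGroup E] [NormedSpace ℝ E]
    {S : Set E} {f : E → ℝ} (hf : ConvexOn ℝ S f) {x y : E} (hx : x ∈ S) (hy : y ∈ S)
    (hfy : DifferentiableAt ℝ f y) : fderiv ℝ f y (x - y) ≤ f x - f y := by
  let ℓ : ℝ →ᵃ[ℝ] E := AffineMap.lineMap y x
  have hℓ0 : ℓ 0 = y := AffineMap.lineMap_apply_zero y x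
  have hℓ1 : ℓ 1 = x := AffineMap.lineMap_apply_one y x
  have hderiv : HasDerivAt (f ∘ ℓ) (fderiv ℝ f y (x - y)) 0 :=
    hfy.hasFDerivAt.comp_hasDerivAt_of_eq 0 AffineMap.hasDerivAt_lineMap hℓ0.symm
  have hslope := (hf.comp_affineMap ℓ).le_slope_of_hasDerivAt
    (show ℓ 0 ∈ S from hℓ0 ▸ hy) (show ℓ 1 ∈ S from hℓ1 ▸ hx) zero_lt_one hderiv
  rwa [slope_def_field, Function.comp_apply, Function.comp_apply, hℓ0, hℓ1, sub_zero,
    div_one] at hslope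

theorem continuousOn_of_abs_sub_le_mul_sum_abs {k : ℕ} {Ψ : (Fin k → ℝ) → ℝ}
    {s : Set (Fin k → ℝ)} {τ : ℝ}
    (hΨ : ∀ u ∈ s, ∀ v ∈ s, |Ψ u - Ψ v| ≤ τ * ∑ j, |u j - v j|) : ContinuousOn Ψ s := by
  refine (LipschitzOnWith.of_dist_le' (K := |τ| * k) fun u hu v hv => ?_).continuousOn
  have hsum : ∑ j, |u j - v j| ≤ k * dist u v := by
    simpa [← Real.dist_eq] using Finset.sum_le_card_nsmul Finset.univ _ _
      fun j _ => dist_le_pi_dist u v j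
  calc dist (Ψ u) (Ψ v) ≤ τ * ∑ j, |u j - v j| := (Real.dist_eq _ _).trans_le (hΨ u hu v hv)
    _ ≤ |τ| * ∑ j, |u j - v j| := by gcongr; exact le_abs_self τ
    _ ≤ |τ| * k * dist u v := by rw [mul_assoc]; gcongr

theorem Continuous.integrable_of_ae_mem_isCompact {X : Type*} [TopologicalSpace X] [T2Space X]
    [MeasurableSpace X] [OpensMeasurableSpace X] {μ : Measure X} [IsFiniteMeasure μ]
    {E : Type*} [NormedAddCommGroup E] {f : X → E} (hf : Continuous f) {K : Set X} (hK : IsCompact K) (hμK : ∀ᵐ x ∂μ, x ∈ K) :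
    Integrable f μ := by
  rw [← Measure.restrict_eq_self_of_ae_mem hμK]
  exact hf.continuousOn.integrableOn_compact hK

section Bregman

variable {p : ℕ} {φ : EuclideanSpace ℝ (Fin p) → ℝ}

theorem dphi_nonneg (hconv : ConvexOn ℝ univ φ) {y : EuclideanSpace ℝ (Fin p)}
    (hy : DifferentiableAt ℝ φ y) (x : EuclideanSpace ℝ (Fin p)) : 0 ≤ dphi φ x y := by
  have := hconv.fderiv_apply_sub_le (mem_univ x) (mem_univ y) hy
  rw [dphi, inner_gradient_left]
  linarith

theorem continuous_dphi_left (hφ : Continuous φ) (θ : EuclideanSpace ℝ (Fin p)) :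
    Continuous fun x => dphi φ x θ := by
  unfold dphi
  fun_prop

theorem continuousOn_dphi (hφ : Continuous φ) {K : Set (EuclideanSpace ℝ (Fin p))}
    (hg : ContinuousOn (gradient φ) K) :
    ContinuousOn (fun q : EuclideanSpace ℝ (Fin p) × EuclideanSpace ℝ (Fin p) => dphi φ q.1 q.2)
      (univ ×ˢ K) := by
  have hgrad : ContinuousOn (fun q : EuclideanSpace ℝ (Fin p) × EuclideanSpace ℝ (Fin p) =>
      gradient φ q.2) (univ ×ˢ K) :=
    hg.comp continuous_snd.continuousOn fun _ hq => hq.2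
  unfold dphi
  exact ((hφ.comp continuous_fst).continuousOn.sub (hφ.comp continuous_snd).continuousOn).sub
    (hgrad.inner (continuous_fst.sub continuous_snd).continuousOn)

theorem hasFDerivAt_dphi_left {y : EuclideanSpace ℝ (Fin p)} (hy : DifferentiableAt ℝ φ y)
    (θ : EuclideanSpace ℝ (Fin p)) :
    HasFDerivAt (fun z => dphi φ z θ) (fderiv ℝ φ y - innerSL ℝ (gradient φ θ)) y := by
  have hfun : (fun z => dphi φ z θ) =
      fun z => φ z - innerSL ℝ (gradient φ θ) z - (φ θ - inner ℝ (gradient φ θ) θ) := by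
    ext z
    simp only [dphi, innerSL_apply_apply, inner_sub_right]
    ring
  rw [hfun]
  exact (hy.hasFDerivAt.sub (innerSL ℝ (gradient φ θ)).hasFDerivAt).sub_const _

theorem dphi_add_dphi_le_of_isMinOn {s : Set (EuclideanSpace ℝ (Fin p))} (hs : Convex ℝ s)
    {θ θ' x : EuclideanSpace ℝ (Fin p)} (hθ' : θ' ∈ s) (hφθ' : DifferentiableAt ℝ φ θ')
    (hmin : IsMinOn (fun y => dphi φ y θ) s θ') (hx : x ∈ s) :
    dphi φ x θ' + dphi φ θ' θ ≤ dphi φ x θ := by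
  have hvar := hmin.localize.hasFDerivWithinAt_nonneg
    (hasFDerivAt_dphi_left hφθ' θ).hasFDerivWithinAt
    (sub_mem_posTangentConeAt_of_segment_subset (hs.segment_subset hθ' hx))
  rw [sub_apply, innerSL_apply_apply, ← inner_gradient_left] at hvar
  have hthree : dphi φ x θ = dphi φ x θ' + dphi φ θ' θ +
      (inner ℝ (gradient φ θ') (x - θ') - inner ℝ (gradient φ θ) (x - θ')) := by
    simp only [dphi, inner_sub_right]
    ring
  linarith

theorem exists_forall_dphi_le (hconv : ConvexOn ℝ univ φ) (hdiff : Differentiable ℝ φ)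
    {K : Set (EuclideanSpace ℝ (Fin p))} (hKc : IsCompact K) (hKv : Convex ℝ K)
    (hKne : K.Nonempty) (θ : EuclideanSpace ℝ (Fin p)) :
    ∃ θ' ∈ K, ∀ x ∈ K, dphi φ x θ' ≤ dphi φ x θ := by
  obtain ⟨θ', hθ'K, hmin⟩ :=
    hKc.exists_isMinOn hKne (continuous_dphi_left hdiff.continuous θ).continuousOn
  refine ⟨θ', hθ'K, fun x hx => ?_⟩
  linarith [dphi_add_dphi_le_of_isMinOn hKv hθ'K (hdiff θ') hmin hx,
    dphi_nonneg hconv (hdiff θ) θ']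

end Bregman

section Risk

variable {p k : ℕ} {φ : EuclideanSpace ℝ (Fin p) → ℝ} {Ψ : (Fin k → ℝ) → ℝ}

theorem dphi_pi_nonneg (hconv : ConvexOn ℝ univ φ) (hdiff : Differentiable ℝ φ)
    (x : EuclideanSpace ℝ (Fin p)) (Θ : Fin k → EuclideanSpace ℝ (Fin p)) :
    0 ≤ fun j => dphi φ x (Θ j) :=
  Pi.le_def.2 fun j => dphi_nonneg hconv (hdiff (Θ j)) x

theorem continuous_fTheta (hconv : ConvexOn ℝ univ φ) (hdiff : Differentiable ℝ φ)
    (hΨ : ContinuousOn Ψ (Ici 0)) (Θ : Fin k → EuclideanSpace ℝ (Fin p)) :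
    Continuous (fTheta φ Ψ Θ) :=
  hΨ.comp_continuous (continuous_pi fun j => continuous_dphi_left hdiff.continuous (Θ j))
    fun x => dphi_pi_nonneg hconv hdiff x Θ

theorem continuousOn_fTheta_uncurry (hconv : ConvexOn ℝ univ φ) (hdiff : Differentiable ℝ φ)
    (hΨ : ContinuousOn Ψ (Ici 0)) {K : Set (EuclideanSpace ℝ (Fin p))}
    (hg : ContinuousOn (gradient φ) K) :
    ContinuousOn (Function.uncurry (fTheta φ Ψ)) ((univ.pi fun _ => K) ×ˢ univ) := by
  refine hΨ.comp (continuousOn_pi.2 fun j => ?_) fun q _ => dphi_pi_nonneg hconv hdiff _ _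
  have hpair : Continuous fun q : (Fin k → EuclideanSpace ℝ (Fin p)) × EuclideanSpace ℝ (Fin p) =>
      (q.2, q.1 j) := by fun_prop
  exact (continuousOn_dphi hdiff.continuous hg).comp hpair.continuousOn
    fun q hq => ⟨mem_univ _, hq.1 j (mem_univ j)⟩

theorem continuousOn_integral_fTheta {Q : Measure (EuclideanSpace ℝ (Fin p))} [IsFiniteMeasure Q]
    (hconv : ConvexOn ℝ univ φ) (hdiff : Differentiable ℝ φ) (hΨ : ContinuousOn Ψ (Ici 0))
    {K : Set (EuclideanSpace ℝ (Fin p))} (hK : IsCompact K) (hg : ContinuousOn (gradient φ) K)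
    (hQK : ∀ᵐ x ∂Q, x ∈ K) :
    ContinuousOn (fun Θ => ∫ x, fTheta φ Ψ Θ x ∂Q) (univ.pi fun _ => K) := by
  have hcont := continuousOn_fTheta_uncurry hconv hdiff hΨ hg
  obtain ⟨C, hC⟩ := ((isCompact_univ_pi fun _ => hK).prod hK).exists_bound_of_continuousOn
    (hcont.mono (prod_mono subset_rfl (subset_univ K)))
  exact continuousOn_of_dominated (bound := fun _ => C)
    (fun Θ _ => (continuous_fTheta hconv hdiff hΨ Θ).aestronglyMeasurable)
    (fun Θ hΘ => hQK.mono fun x hx => hC (Θ, x) ⟨hΘ, hx⟩) (integrable_const C)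
    (ae_of_all _ fun x => hcont.uncurry_right x (mem_univ x))

theorem exists_forall_integral_fTheta_le {Q : Measure (EuclideanSpace ℝ (Fin p))}
    [IsProbabilityMeasure Q] (hconv : ConvexOn ℝ univ φ) (hdiff : Differentiable ℝ φ)
    (hΨmono : MonotoneOn Ψ (Ici 0)) (hΨ : ContinuousOn Ψ (Ici 0))
    {K : Set (EuclideanSpace ℝ (Fin p))} (hKc : IsCompact K) (hKv : Convex ℝ K)
    (hg : ContinuousOn (gradient φ) K) (hQK : ∀ᵐ x ∂Q, x ∈ K) :
    ∃ Θ₀ ∈ univ.pi fun _ => K, ∀ Θ, ∫ x, fTheta φ Ψ Θ₀ x ∂Q ≤ ∫ x, fTheta φ Ψ Θ x ∂Q := by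
  have hKne : K.Nonempty := hQK.exists
  obtain ⟨Θ₀, hΘ₀, hmin⟩ := (isCompact_univ_pi fun _ => hKc).exists_isMinOn
    (univ_pi_nonempty_iff.2 fun _ => hKne) (continuousOn_integral_fTheta hconv hdiff hΨ hKc hg hQK)
  refine ⟨Θ₀, hΘ₀, fun Θ => ?_⟩
  choose Θ' hΘ'K hΘ'le using fun j => exists_forall_dphi_le hconv hdiff hKc hKv hKne (Θ j)
  have hintegrable : ∀ Θ, Integrable (fTheta φ Ψ Θ) Q := fun Θ =>
    (continuous_fTheta hconv hdiff hΨ Θ).integrable_of_ae_mem_isCompact hKc hQK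
  have hproj_le : ∀ᵐ x ∂Q, fTheta φ Ψ Θ' x ≤ fTheta φ Ψ Θ x := hQK.mono fun x hx =>
    hΨmono (dphi_pi_nonneg hconv hdiff x Θ') (dphi_pi_nonneg hconv hdiff x Θ)
      fun j => hΘ'le j x hx
  calc ∫ x, fTheta φ Ψ Θ₀ x ∂Q ≤ ∫ x, fTheta φ Ψ Θ' x ∂Q := hmin fun j _ => hΘ'K j
    _ ≤ ∫ x, fTheta φ Ψ Θ x ∂Q := integral_mono_ae (hintegrable Θ') (hintegrable Θ) hproj_le

end Risk

theorem cube_eq_preimage_pi (p : ℕ) (M : ℝ) :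
    cube p M = EuclideanSpace.equiv (Fin p) ℝ ⁻¹' univ.pi fun _ => Icc (-M) M := by
  ext x
  simp [cube, abs_le, Pi.le_def, forall_and]

theorem isCompact_cube (p : ℕ) (M : ℝ) : IsCompact (cube p M) := by
  rw [cube_eq_preimage_pi]
  exact (EuclideanSpace.equiv (Fin p) ℝ).toHomeomorph.isCompact_preimage.2
    (isCompact_univ_pi fun _ => isCompact_Icc)

theorem convex_cube (p : ℕ) (M : ℝ) : Convex ℝ (cube p M) := by
  rw [cube_eq_preimage_pi]
  exact (convex_pi fun _ _ => convex_Icc _ _).linear_preimage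
    (EuclideanSpace.equiv (Fin p) ℝ).toLinearMap

theorem exists_min_in_cube_general
    {p k : ℕ} {M : ℝ}
    (φ : EuclideanSpace ℝ (Fin p) → ℝ)
    (hφconv : ConvexOn ℝ Set.univ φ) (hφdiff : Differentiable ℝ φ)
    {H : ℝ}
    (hgradlip : ∀ x ∈ cube p M, ∀ y ∈ cube p M,
      ‖gradient φ x - gradient φ y‖ ≤ H * ‖x - y‖)
    (Ψ : (Fin k → ℝ) → ℝ)
    (hΨmono : ∀ u v : Fin k → ℝ, (∀ j, 0 ≤ u j) → (∀ j, u j ≤ v j) → Ψ u ≤ Ψ v)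
    {τ : ℝ}
    (hΨlip : ∀ u v : Fin k → ℝ, (∀ j, 0 ≤ u j) → (∀ j, 0 ≤ v j) →
      |Ψ u - Ψ v| ≤ τ * ∑ j, |u j - v j|)
    (Q : Measure (EuclideanSpace ℝ (Fin p))) [IsProbabilityMeasure Q]
    (hQ : Q (cube p M) = 1) :
    ∃ Θ₀ : Fin k → EuclideanSpace ℝ (Fin p),
      (∀ j, Θ₀ j ∈ cube p M) ∧
      (∀ Θ : Fin k → EuclideanSpace ℝ (Fin p),
        ∫ x, fTheta φ Ψ Θ₀ x ∂Q ≤ ∫ x, fTheta φ Ψ Θ x ∂Q) ∧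
      sInf ((fun Θ => ∫ x, fTheta φ Ψ Θ x ∂Q) '' Set.univ) =
        sInf ((fun Θ => ∫ x, fTheta φ Ψ Θ x ∂Q) ''
          {Θ : Fin k → EuclideanSpace ℝ (Fin p) | ∀ j, Θ j ∈ cube p M}) ∧
      sInf ((fun Θ => ∫ x, fTheta φ Ψ Θ x ∂Q) '' Set.univ) =
        ∫ x, fTheta φ Ψ Θ₀ x ∂Q := by
  have hQK : ∀ᵐ x ∂Q, x ∈ cube p M :=
    (ae_mem_iff_measure_eq (isCompact_cube p M).isClosed.measurableSet.nullMeasurableSet).2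
      (by rw [hQ, measure_univ])
  have hg : ContinuousOn (gradient φ) (cube p M) :=
    (LipschitzOnWith.of_dist_le' (K := H) fun x hx y hy => by
      simpa only [dist_eq_norm] using hgradlip x hx y hy).continuousOn
  obtain ⟨Θ₀, hΘ₀, hmin⟩ := exists_forall_integral_fTheta_le hφconv hφdiff
    (fun u hu _ _ huv => hΨmono u _ hu huv)
    (continuousOn_of_abs_sub_le_mul_sum_abs fun u hu v hv => hΨlip u v hu hv)
    (isCompact_cube p M) (convex_cube p M) hg hQK
  have hsInf : ∀ S, Θ₀ ∈ S →
      sInf ((fun Θ => ∫ x, fTheta φ Ψ Θ x ∂Q) '' S) = ∫ x, fTheta φ Ψ Θ₀ x ∂Q :=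
    fun S hS => IsLeast.csInf_eq ⟨mem_image_of_mem _ hS, forall_mem_image.2 fun Θ _ => hmin Θ⟩
  have hΘ₀cube : ∀ j, Θ₀ j ∈ cube p M := fun j => hΘ₀ j (mem_univ j)
  exact ⟨Θ₀, hΘ₀cube, hmin,
    (hsInf _ (mem_univ _)).trans (hsInf {Θ | ∀ j, Θ j ∈ cube p M} hΘ₀cube).symm,
    hsInf _ (mem_univ _)⟩

/-- The population risk attains its global infimum (over all of `(ℝ^p)^k`)
at some configuration of centroids lying in `([-M,M]^p)^k`; in particular the
infimum over all configurations equals the infimum over the cube. -/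
theorem exists_min_in_cube
    {p k : ℕ} (hp : 0 < p) (hk : 0 < k) {M : ℝ} (hM : 0 < M)
    (φ : EuclideanSpace ℝ (Fin p) → ℝ)
    (hφconv : ConvexOn ℝ Set.univ φ) (hφdiff : Differentiable ℝ φ)
    (hφzero : φ 0 = 0) (hgradzero : gradient φ 0 = 0)
    {H : ℝ} (hH : 0 ≤ H)
    (hgradlip : ∀ x ∈ cube p M, ∀ y ∈ cube p M,
      ‖gradient φ x - gradient φ y‖ ≤ H * ‖x - y‖)
    (Ψ : (Fin k → ℝ) → ℝ)
    (hΨnonneg : ∀ u : Fin k → ℝ, (∀ j, 0 ≤ u j) → 0 ≤ Ψ u)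
    (hΨmono : ∀ u v : Fin k → ℝ, (∀ j, 0 ≤ u j) → (∀ j, u j ≤ v j) → Ψ u ≤ Ψ v)
    (hΨzero : Ψ 0 = 0)
    {τ : ℝ} (hτ : 0 < τ)
    (hΨlip : ∀ u v : Fin k → ℝ, (∀ j, 0 ≤ u j) → (∀ j, 0 ≤ v j) →
      |Ψ u - Ψ v| ≤ τ * ∑ j, |u j - v j|)
    (Q : Measure (EuclideanSpace ℝ (Fin p))) [IsProbabilityMeasure Q]
    (hQ : Q (cube p M) = 1) :
    ∃ Θ₀ : Fin k → EuclideanSpace ℝ (Fin p),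
      (∀ j, Θ₀ j ∈ cube p M) ∧
      (∀ Θ : Fin k → EuclideanSpace ℝ (Fin p),
        ∫ x, fTheta φ Ψ Θ₀ x ∂Q ≤ ∫ x, fTheta φ Ψ Θ x ∂Q) ∧
      sInf ((fun Θ => ∫ x, fTheta φ Ψ Θ x ∂Q) '' Set.univ) =
        sInf ((fun Θ => ∫ x, fTheta φ Ψ Θ x ∂Q) ''
          {Θ : Fin k → EuclideanSpace ℝ (Fin p) | ∀ j, Θ j ∈ cube p M}) ∧
      sInf ((fun Θ => ∫ x, fTheta φ Ψ Θ x ∂Q) '' Set.univ) =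
        ∫ x, fTheta φ Ψ Θ₀ x ∂Q :=
  exists_min_in_cube_general φ hφconv hφdiff hgradlip Ψ hΨmono hΨlip Q hQ
end

section
/- For all Θ, Θ′ ∈ ([−M,M]^p)^k, sup over x ∈ [−M,M]^p of |f_Θ(x) − f_{Θ′}(x)| is at most 8 τ H_p M² k p; that is, the diameter in the supremum norm of the function class F = {f_Θ restricted to [−M,M]^p : Θ ∈ ([−M,M]^p)^k} is at most 8 τ H_p M² k p. -/
open MeasureTheory ProbabilityTheory Real Filter
open scoped ENNReal

/-!
Both divergences `d_φ(x, θ_j)` and `d_φ(x, θ'_j)` lie in `[0, 4 H p M²]`: they are nonnegative by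
convexity, and convexity at `x` also gives `d_φ(x, θ) ≤ ⟪∇φ x - ∇φ θ, x - θ⟫ ≤ H ‖x - θ‖²`, where
`‖x - θ‖² ≤ 4 p M²` on the cube. Hence each coordinate changes by at most `4 H p M²`, and the
`ℓ¹`-Lipschitz bound on `Ψ` gives `|f_Θ x - f_Θ' x| ≤ 4 τ H M² k p`.
-/

open scoped InnerProductSpace

theorem ConvexOn.le_sub_of_hasFDerivAt {E : Type*} [NormedAddCommGroup E] [NormedSpace ℝ E]
    {s : Set E} {f : E → ℝ} {f' : E →L[ℝ] ℝ} {x y : E} (hf : ConvexOn ℝ s f) (hx : x ∈ s)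
    (hy : y ∈ s) (hf' : HasFDerivAt f f' y) : f' (x - y) ≤ f x - f y := by
  set l : ℝ →ᵃ[ℝ] E := AffineMap.lineMap y x
  have hl : HasDerivAt (f ∘ l) (f' (x - y)) 0 := by
    have hf'' : HasFDerivAt f f' (l 0) := by simpa [l] using hf'
    exact hf''.comp_hasDerivAt 0 AffineMap.hasDerivAt_lineMap
  have := (hf.comp_affineMap l).le_slope_of_hasDerivAt (by simpa [l] using hy)
    (by simpa [l] using hx) one_pos hl
  simpa [slope_def_field, l] using this

theorem ConvexOn.inner_gradient_le_sub {E : Type*} [NormedAddCommGroup E]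
    [InnerProductSpace ℝ E] [CompleteSpace E] {s : Set E} {f : E → ℝ} {x y : E}
    (hf : ConvexOn ℝ s f) (hx : x ∈ s) (hy : y ∈ s) (hd : DifferentiableAt ℝ f y) :
    ⟪gradient f y, x - y⟫_ℝ ≤ f x - f y := by
  simpa using hf.le_sub_of_hasFDerivAt hx hy hd.hasGradientAt.hasFDerivAt

section Bregman

variable {p : ℕ} {φ : EuclideanSpace ℝ (Fin p) → ℝ} {s : Set (EuclideanSpace ℝ (Fin p))}
  {x y : EuclideanSpace ℝ (Fin p)}

theorem dphi_nonneg_s7 (hφ : ConvexOn ℝ s φ) (hx : x ∈ s) (hy : y ∈ s)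
    (hdy : DifferentiableAt ℝ φ y) : 0 ≤ dphi φ x y := by
  have := hφ.inner_gradient_le_sub hx hy hdy
  unfold dphi
  linarith

theorem dphi_le_inner_gradient_sub (hφ : ConvexOn ℝ s φ) (hx : x ∈ s) (hy : y ∈ s)
    (hdx : DifferentiableAt ℝ φ x) :
    dphi φ x y ≤ ⟪gradient φ x - gradient φ y, x - y⟫_ℝ := by
  have := hφ.inner_gradient_le_sub hy hx hdx
  rw [← neg_sub x y, inner_neg_right] at this
  rw [dphi, inner_sub_left]
  linarith

theorem dphi_le_mul_norm_sq (hφ : ConvexOn ℝ s φ) (hx : x ∈ s) (hy : y ∈ s)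
    (hdx : DifferentiableAt ℝ φ x) {H : ℝ}
    (hlip : ‖gradient φ x - gradient φ y‖ ≤ H * ‖x - y‖) :
    dphi φ x y ≤ H * ‖x - y‖ ^ 2 :=
  calc dphi φ x y ≤ ⟪gradient φ x - gradient φ y, x - y⟫_ℝ :=
        dphi_le_inner_gradient_sub hφ hx hy hdx
    _ ≤ ‖gradient φ x - gradient φ y‖ * ‖x - y‖ := real_inner_le_norm _ _
    _ ≤ H * ‖x - y‖ * ‖x - y‖ := by gcongr
    _ = H * ‖x - y‖ ^ 2 := by ring

end Bregman

section Cube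

variable {p : ℕ} {M : ℝ} {x y : EuclideanSpace ℝ (Fin p)}

theorem sub_mem_cube (hx : x ∈ cube p M) (hy : y ∈ cube p M) : x - y ∈ cube p (2 * M) := by
  intro i
  simpa [two_mul] using (abs_sub _ _).trans (add_le_add (hx i) (hy i))

theorem norm_sq_le_of_mem_cube (hx : x ∈ cube p M) : ‖x‖ ^ 2 ≤ p * M ^ 2 := by
  rw [EuclideanSpace.norm_sq_eq]
  calc ∑ i, ‖x i‖ ^ 2 ≤ ∑ _i : Fin p, M ^ 2 :=
        Finset.sum_le_sum fun i _ => by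
          rw [Real.norm_eq_abs, sq_abs]
          exact sq_le_sq' (neg_le_of_abs_le (hx i)) (le_of_abs_le (hx i))
    _ = p * M ^ 2 := by simp

theorem norm_sub_sq_le_of_mem_cube (hx : x ∈ cube p M) (hy : y ∈ cube p M) :
    ‖x - y‖ ^ 2 ≤ 4 * p * M ^ 2 := by
  linarith [norm_sq_le_of_mem_cube (sub_mem_cube hx hy)]

end Cube

theorem fTheta_diameter_bound_general
    {p k : ℕ} {M : ℝ}
    (φ : EuclideanSpace ℝ (Fin p) → ℝ)
    (hφconv : ConvexOn ℝ Set.univ φ) (hφdiff : Differentiable ℝ φ)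
    {H : ℝ} (hH : 0 ≤ H)
    (hgradlip : ∀ x ∈ cube p M, ∀ y ∈ cube p M,
      ‖gradient φ x - gradient φ y‖ ≤ H * ‖x - y‖)
    (Ψ : (Fin k → ℝ) → ℝ)
    {τ : ℝ} (hτ : 0 < τ)
    (hΨlip : ∀ u v : Fin k → ℝ, (∀ j, 0 ≤ u j) → (∀ j, 0 ≤ v j) →
      |Ψ u - Ψ v| ≤ τ * ∑ j, |u j - v j|)
    :
    ∀ Θ Θ' : Fin k → EuclideanSpace ℝ (Fin p),
      (∀ j, Θ j ∈ cube p M) → (∀ j, Θ' j ∈ cube p M) →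
      ∀ x ∈ cube p M,
        |fTheta φ Ψ Θ x - fTheta φ Ψ Θ' x| ≤ 8 * τ * H * M ^ 2 * k * p := by
  intro Θ Θ' hΘ hΘ' x hx
  have hd_nonneg : ∀ θ, 0 ≤ dphi φ x θ := fun θ =>
    dphi_nonneg_s7 hφconv (Set.mem_univ x) (Set.mem_univ θ) (hφdiff θ)
  have hd_le : ∀ θ ∈ cube p M, dphi φ x θ ≤ 4 * H * p * M ^ 2 := fun θ hθ =>
    calc dphi φ x θ ≤ H * ‖x - θ‖ ^ 2 := dphi_le_mul_norm_sq hφconv (Set.mem_univ x)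
          (Set.mem_univ θ) (hφdiff x) (hgradlip x hx θ hθ)
      _ ≤ H * (4 * p * M ^ 2) := by gcongr; exact norm_sub_sq_le_of_mem_cube hx hθ
      _ = 4 * H * p * M ^ 2 := by ring
  have hcoord : ∀ j, |dphi φ x (Θ j) - dphi φ x (Θ' j)| ≤ 4 * H * p * M ^ 2 := fun j =>
    abs_sub_le_of_nonneg_of_le (hd_nonneg _) (hd_le _ (hΘ j)) (hd_nonneg _) (hd_le _ (hΘ' j))
  have hbound_nonneg : 0 ≤ τ * H * M ^ 2 * k * p := by positivity
  calc |fTheta φ Ψ Θ x - fTheta φ Ψ Θ' x|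
      ≤ τ * ∑ j, |dphi φ x (Θ j) - dphi φ x (Θ' j)| :=
        hΨlip _ _ (fun j => hd_nonneg _) (fun j => hd_nonneg _)
    _ ≤ τ * ∑ _j : Fin k, 4 * H * p * M ^ 2 := by gcongr with j; exact hcoord j
    _ = 4 * τ * H * M ^ 2 * k * p := by simp only [Finset.sum_const, Finset.card_univ,
        Fintype.card_fin, nsmul_eq_mul]; ring
    _ ≤ 8 * τ * H * M ^ 2 * k * p := by linarith

/-- Diameter bound in the supremum norm for the class
`F = {f_Θ : Θ ∈ ([-M,M]^p)^k}`: it is at most `8 τ H M² k p`. -/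
theorem fTheta_diameter_bound
    {p k : ℕ} (hp : 0 < p) (hk : 0 < k) {M : ℝ} (hM : 0 < M)
    (φ : EuclideanSpace ℝ (Fin p) → ℝ)
    (hφconv : ConvexOn ℝ Set.univ φ) (hφdiff : Differentiable ℝ φ)
    (hφzero : φ 0 = 0) (hgradzero : gradient φ 0 = 0)
    {H : ℝ} (hH : 0 ≤ H)
    (hgradlip : ∀ x ∈ cube p M, ∀ y ∈ cube p M,
      ‖gradient φ x - gradient φ y‖ ≤ H * ‖x - y‖)
    (Ψ : (Fin k → ℝ) → ℝ)
    (hΨnonneg : ∀ u : Fin k → ℝ, (∀ j, 0 ≤ u j) → 0 ≤ Ψ u)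
    (hΨmono : ∀ u v : Fin k → ℝ, (∀ j, 0 ≤ u j) → (∀ j, u j ≤ v j) → Ψ u ≤ Ψ v)
    (hΨzero : Ψ 0 = 0)
    {τ : ℝ} (hτ : 0 < τ)
    (hΨlip : ∀ u v : Fin k → ℝ, (∀ j, 0 ≤ u j) → (∀ j, 0 ≤ v j) →
      |Ψ u - Ψ v| ≤ τ * ∑ j, |u j - v j|)
    :
    ∀ Θ Θ' : Fin k → EuclideanSpace ℝ (Fin p),
      (∀ j, Θ j ∈ cube p M) → (∀ j, Θ' j ∈ cube p M) →
      ∀ x ∈ cube p M,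
        |fTheta φ Ψ Θ x - fTheta φ Ψ Θ' x| ≤ 8 * τ * H * M ^ 2 * k * p :=
  fTheta_diameter_bound_general φ hφconv hφdiff hH hgradlip Ψ hτ hΨlip
end
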